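/- arXiv:1401.6584 — 3 statements merged into one kernel-verified Lean document; each statement's English description precedes it below -/
import Mathlib

section
/- Let A and B be d×d real symmetric matrices with eigenvalues λ_1(A) ≥ ⋯ ≥ λ_d(A) and λ_1(B) ≥ ⋯ ≥ λ_d(B). Then ∑_{i=1}^d (λ_i(A) - λ_i(B))^2 ≤ ∑_{i,j=1}^d (A_{ij} - B_{ij})^2 (Hoffman–Wielandt inequality). -/
/-!
Diagonalize `A = U diag(α) Uᵀ` and `B = V diag(β) Vᵀ` with `U`, `V` orthogonal. Expanding the
square, it suffices to show `tr (A B) ≤ ∑ μᵢ νᵢ`. With `W = Uᵀ V` one has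
`tr (A B) = ∑ᵢⱼ Wᵢⱼ² αᵢ βⱼ`, and `(Wᵢⱼ²)` is doubly stochastic because `W` is orthogonal. By
Birkhoff's theorem this linear function of a doubly stochastic matrix is maximal at a permutation
matrix, where the rearrangement inequality bounds it by `∑ μᵢ νᵢ`.
-/

open Matrix

section DoublyStochastic

variable {R n : Type*} [Fintype n] [DecidableEq n]

theorem submatrix_mem_doublyStochastic [Semiring R] [PartialOrder R] [IsOrderedRing R]
    {S : Matrix n n R} (hS : S ∈ doublyStochastic R n) (σ τ : Equiv.Perm n) :
    S.submatrix σ τ ∈ doublyStochastic R n := by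
  rw [mem_doublyStochastic_iff_sum] at hS ⊢
  obtain ⟨hS₀, hrow, hcol⟩ := hS
  exact ⟨fun i j => hS₀ _ _, fun i => by simpa using (Equiv.sum_comp τ _).trans (hrow (σ i)),
    fun j => by simpa using (Equiv.sum_comp σ _).trans (hcol (τ j))⟩

theorem hadamard_self_mem_doublyStochastic_of_mem_orthogonalGroup {U : Matrix n n ℝ}
    (hU : U ∈ orthogonalGroup n ℝ) : U ⊙ U ∈ doublyStochastic ℝ n := by
  rw [mem_doublyStochastic_iff_sum]
  refine ⟨fun i j => mul_self_nonneg _, fun i => ?_, fun j => ?_⟩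
  · simpa [mul_apply] using congr_fun₂ ((mem_orthogonalGroup_iff n ℝ).mp hU) i i
  · simpa [mul_apply] using congr_fun₂ ((mem_orthogonalGroup_iff' n ℝ).mp hU) j j

variable [Field R] [LinearOrder R] [IsStrictOrderedRing R]

theorem Monovary.dotProduct_mulVec_le_of_mem_doublyStochastic {a b : n → R}
    (hab : Monovary a b) {S : Matrix n n R} (hS : S ∈ doublyStochastic R n) :
    a ⬝ᵥ S *ᵥ b ≤ a ⬝ᵥ b := by
  let pairing : Matrix n n R →ₗ[R] R :=
    { toFun := fun M => a ⬝ᵥ M *ᵥ b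
      map_add' := fun M N => by simp [add_mulVec, dotProduct_add]
      map_smul' := fun c M => by simp [smul_mulVec, dotProduct_smul] }
  rw [← SetLike.mem_coe, doublyStochastic_eq_convexHull_permMatrix] at hS
  obtain ⟨_, ⟨σ, rfl⟩, hσ⟩ :=
    (pairing.convexOn convex_univ).exists_ge_of_mem_convexHull (Set.subset_univ _) hS
  refine hσ.trans ?_
  simpa [pairing, permMatrix_mulVec, dotProduct] using hab.sum_mul_comp_perm_le_sum_mul

end DoublyStochastic

section Trace

variable {R n : Type*} [Fintype n] [DecidableEq n] [CommSemiring R]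

theorem trace_diagonal_mul_mul_diagonal_mul_transpose (a b : n → R) (W : Matrix n n R) :
    trace (diagonal a * W * diagonal b * Wᵀ) = a ⬝ᵥ (W ⊙ W) *ᵥ b := by
  rw [dotProduct_mulVec, dotProduct_vecMul_hadamard, transpose_mul, diagonal_transpose,
    Matrix.mul_assoc]

theorem trace_conj_diagonal_mul_conj_diagonal (U V : Matrix n n R) (a b : n → R) :
    trace (U * diagonal a * Uᵀ * (V * diagonal b * Vᵀ)) =
      a ⬝ᵥ ((Uᵀ * V) ⊙ (Uᵀ * V)) *ᵥ b := by
  rw [← trace_diagonal_mul_mul_diagonal_mul_transpose, transpose_mul, transpose_transpose]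
  simp only [Matrix.mul_assoc]
  rw [trace_mul_comm U]
  simp only [Matrix.mul_assoc]

end Trace

theorem Matrix.IsSymm.sum_sub_sq_eq_trace {R n : Type*} [Fintype n] [CommRing R]
    {A B : Matrix n n R} (hA : A.IsSymm) (hB : B.IsSymm) :
    ∑ i, ∑ j, (A i j - B i j) ^ 2 = trace (A * A) - 2 * trace (A * B) + trace (B * B) := by
  have hfrob : ∑ i, ∑ j, (A i j - B i j) ^ 2 = trace ((A - B) * (A - B)ᵀ) := by
    simp only [sq]
    exact sum_hadamard_eq ..
  rw [hfrob, transpose_sub, hA.eq, hB.eq, sub_mul, mul_sub, mul_sub, trace_sub, trace_sub,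
    trace_sub, trace_mul_comm B A]
  ring

namespace Matrix.IsHermitian

variable {n : Type*} [Fintype n] [DecidableEq n] {A B : Matrix n n ℝ}

theorem exists_orthogonal_eq_mul_diagonal_mul_transpose (hA : A.IsHermitian) :
    ∃ U ∈ orthogonalGroup n ℝ, A = U * diagonal hA.eigenvalues * Uᵀ := by
  refine ⟨_, hA.eigenvectorUnitary.2, ?_⟩
  conv_lhs => rw [hA.spectral_theorem]
  simp [Unitary.conjStarAlgAut_apply, star_eq_conjTranspose,
    conjTranspose_eq_transpose_of_trivial]

theorem trace_mul_self (hA : A.IsHermitian) :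
    trace (A * A) = hA.eigenvalues ⬝ᵥ hA.eigenvalues := by
  obtain ⟨U, hU, hAU⟩ := hA.exists_orthogonal_eq_mul_diagonal_mul_transpose
  conv_lhs => rw [hAU]
  rw [trace_conj_diagonal_mul_conj_diagonal, (mem_orthogonalGroup_iff' n ℝ).mp hU,
    one_hadamard, diag_one]
  simp

theorem trace_mul_le_of_monovary (hA : A.IsHermitian) (hB : B.IsHermitian) {σ τ : Equiv.Perm n}
    (h : Monovary (hA.eigenvalues ∘ σ) (hB.eigenvalues ∘ τ)) :
    trace (A * B) ≤ (hA.eigenvalues ∘ σ) ⬝ᵥ (hB.eigenvalues ∘ τ) := by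
  obtain ⟨U, hU, hAU⟩ := hA.exists_orthogonal_eq_mul_diagonal_mul_transpose
  obtain ⟨V, hV, hBV⟩ := hB.exists_orthogonal_eq_mul_diagonal_mul_transpose
  have hW : Uᵀ * V ∈ orthogonalGroup n ℝ := by
    have := Submonoid.mul_mem _ (Unitary.star_mem hU) hV
    rwa [star_eq_conjTranspose, conjTranspose_eq_transpose_of_trivial] at this
  have hS := submatrix_mem_doublyStochastic
    (hadamard_self_mem_doublyStochastic_of_mem_orthogonalGroup hW) σ τ
  calc trace (A * B)
      = (hA.eigenvalues ∘ σ) ⬝ᵥ ((Uᵀ * V) ⊙ (Uᵀ * V)).submatrix σ τ *ᵥ (hB.eigenvalues ∘ τ) := by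
        conv_lhs => rw [hAU, hBV]
        rw [trace_conj_diagonal_mul_conj_diagonal, submatrix_mulVec_equiv,
          Function.comp_assoc, Equiv.self_comp_symm, Function.comp_id,
          comp_equiv_dotProduct_comp_equiv]
    _ ≤ _ := h.dotProduct_mulVec_le_of_mem_doublyStochastic hS

end Matrix.IsHermitian

/-- Hoffman–Wielandt inequality: if `A`, `B` are real symmetric `d×d` matrices with eigenvalues
listed in decreasing order `μ` and `ν` respectively, then
`∑ i, (μ i - ν i)^2 ≤ ∑ i j, (A i j - B i j)^2`. -/
theorem hoffman_wielandt
    (d : ℕ) (A B : Matrix (Fin d) (Fin d) ℝ)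
    (hA : A.IsHermitian) (hB : B.IsHermitian)
    (μ ν : Fin d → ℝ)
    (hμ : ∃ σ : Equiv.Perm (Fin d), μ = hA.eigenvalues ∘ σ)
    (hν : ∃ σ : Equiv.Perm (Fin d), ν = hB.eigenvalues ∘ σ)
    (hμmono : Antitone μ) (hνmono : Antitone ν) :
    ∑ i, (μ i - ν i) ^ 2 ≤ ∑ i, ∑ j, (A i j - B i j) ^ 2 := by
  obtain ⟨σ, hσ⟩ := hμ
  obtain ⟨τ, hτ⟩ := hν
  have hμμ : μ ⬝ᵥ μ = trace (A * A) := by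
    rw [hA.trace_mul_self, hσ, comp_equiv_dotProduct_comp_equiv]
  have hνν : ν ⬝ᵥ ν = trace (B * B) := by
    rw [hB.trace_mul_self, hτ, comp_equiv_dotProduct_comp_equiv]
  have hμν : trace (A * B) ≤ μ ⬝ᵥ ν := by
    subst hσ hτ
    exact hA.trace_mul_le_of_monovary hB (hμmono.monovary hνmono)
  calc ∑ i, (μ i - ν i) ^ 2 = μ ⬝ᵥ μ - 2 * μ ⬝ᵥ ν + ν ⬝ᵥ ν := by
        simp only [dotProduct, Finset.mul_sum, ← Finset.sum_sub_distrib, ← Finset.sum_add_distrib]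
        exact Finset.sum_congr rfl fun i _ => by ring
    _ ≤ trace (A * A) - 2 * trace (A * B) + trace (B * B) := by linarith
    _ = ∑ i, ∑ j, (A i j - B i j) ^ 2 :=
        ((isHermitian_iff_isSymm.mp hA).sum_sub_sq_eq_trace (isHermitian_iff_isSymm.mp hB)).symm
end

section
/- The integral ∫ over the simplex {μ_1 > ⋯ > μ_d} of ∏_{k<h} (μ_k - μ_h) · |μ_i - μ_j|^{-q} · exp(-∑_{m=1}^d μ_m²/4) dμ is finite for every 0 < q < 2 and every pair i ≠ j. -/
/-!
Drop the ordering constraint and bound the Vandermonde product by its absolute value. After the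
unimodular change of variables `μ_i = y_i + y_j`, `μ_m = y_m` (`m ≠ i`) the gap `μ_i - μ_j`
becomes the coordinate `y_i`; the factor `μ_i - μ_j` of the Vandermonde product turns the
singularity into `|y_i| ^ (1 - q)` with `1 - q > -1`, the other factors are polynomially bounded,
and `∑ μ_m² ≥ (∑ y_m²) / 3` keeps a Gaussian factor, so the integrand is bounded by a product of
integrable functions of one variable.
-/

open MeasureTheory Finset Matrix Real

lemma integrable_abs_rpow_mul_exp_neg_mul_sq {r b : ℝ} (hr : -1 < r) (hb : 0 < b) :
    Integrable (fun x : ℝ => |x| ^ r * exp (-b * x ^ 2)) := by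
  have hIoi : IntegrableOn (fun x : ℝ => |x| ^ r * exp (-b * x ^ 2)) (Set.Ioi 0) :=
    (integrableOn_rpow_mul_exp_neg_mul_sq hb hr).congr_fun
      (fun x hx => by rw [abs_of_pos hx]) measurableSet_Ioi
  rw [← integrableOn_univ, ← Set.Iio_union_Ici (a := (0 : ℝ)), integrableOn_union,
    integrableOn_Ici_iff_integrableOn_Ioi]
  refine ⟨?_, hIoi⟩
  rw [← (Measure.measurePreserving_neg (volume : Measure ℝ)).integrableOn_comp_preimage
      (Homeomorph.neg ℝ).measurableEmbedding]
  simpa only [Function.comp_def, abs_neg, neg_sq, Set.neg_preimage, Set.neg_Iio, neg_zero]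
    using hIoi

lemma one_add_pow_mul_rpow_le {t : ℝ} (ht : 0 < t) (r : ℝ) (N : ℕ) :
    (1 + t) ^ N * t ^ r ≤ 2 ^ N * (t ^ r + t ^ (r + N)) := by
  have hbinom : (1 + t) ^ N ≤ 2 ^ N * (1 + t ^ N) := by
    calc (1 + t) ^ N ≤ 2 ^ (N - 1) * (1 ^ N + t ^ N) := add_pow_le zero_le_one ht.le N
      _ ≤ 2 ^ N * (1 + t ^ N) := by
        rw [one_pow]
        gcongr
        · norm_num
        · omega
  calc (1 + t) ^ N * t ^ r ≤ 2 ^ N * (1 + t ^ N) * t ^ r := by gcongr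
    _ = 2 ^ N * (t ^ r + t ^ (r + N)) := by rw [rpow_add_natCast ht.ne']; ring

lemma integrable_one_add_abs_pow_mul_abs_rpow_mul_exp_neg_mul_sq (N : ℕ) {r b : ℝ}
    (hr : -1 < r) (hb : 0 < b) :
    Integrable (fun x : ℝ => (1 + |x|) ^ N * (|x| ^ r * exp (-b * x ^ 2))) := by
  have hrN : -1 < r + N := by linarith [N.cast_nonneg (α := ℝ)]
  refine (((integrable_abs_rpow_mul_exp_neg_mul_sq hr hb).add
    (integrable_abs_rpow_mul_exp_neg_mul_sq hrN hb)).const_mul (2 ^ N)).mono'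
    (by fun_prop) ?_
  filter_upwards [Measure.ae_ne volume 0] with x hx
  rw [norm_of_nonneg (by positivity)]
  calc (1 + |x|) ^ N * (|x| ^ r * exp (-b * x ^ 2))
      = (1 + |x|) ^ N * |x| ^ r * exp (-b * x ^ 2) := by ring
    _ ≤ 2 ^ N * (|x| ^ r + |x| ^ (r + N)) * exp (-b * x ^ 2) :=
      mul_le_mul_of_nonneg_right (one_add_pow_mul_rpow_le (abs_pos.2 hx) r N) (exp_pos _).le
    _ = _ := by simp only [Pi.add_apply]; ring

lemma mul_rpow_neg_le_rpow_one_sub {t : ℝ} (ht : 0 ≤ t) (q : ℝ) :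
    t * t ^ (-q) ≤ t ^ (1 - q) := by
  rcases ht.eq_or_lt with rfl | ht
  · simpa using rpow_nonneg le_rfl (1 - q)
  · rw [sub_eq_add_neg, rpow_add ht, rpow_one]

lemma abs_prod_le_abs_mul_pow_card_sub_one {α : Type*} [DecidableEq α] {s : Finset α}
    {f : α → ℝ} {a : α} (ha : a ∈ s) {B : ℝ} (hB : ∀ b ∈ s, |f b| ≤ B) :
    |∏ b ∈ s, f b| ≤ |f a| * B ^ (#s - 1) := by
  rw [← mul_prod_erase s f ha, abs_mul, abs_prod, ← card_erase_of_mem ha, ← prod_const]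
  gcongr with b hb
  exact hB b (mem_of_mem_erase hb)

section

variable {ι : Type*} [Fintype ι]

lemma abs_le_prod_one_add_abs (y : ι → ℝ) (k : ι) :
    |y k| ≤ ∏ m, (1 + |y m|) := by
  calc |y k| ≤ 1 + |y k| := by linarith
    _ = ∏ m ∈ {k}, (1 + |y m|) := (prod_singleton (fun m => 1 + |y m|) k).symm
    _ ≤ ∏ m, (1 + |y m|) :=
      prod_le_prod_of_subset_of_one_le (subset_univ _) (fun m _ => by positivity)
        (fun m _ _ => by linarith [abs_nonneg (y m)])

noncomputable def vandermondeGapIntegrand (s : Finset (ι × ι)) (i j : ι) (q : ℝ)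
    (z : ι → ℝ) : ℝ :=
  |∏ p ∈ s, (z p.1 - z p.2)| * |z i - z j| ^ (-q) * exp (-∑ m, z m ^ 2 / 4)

lemma vandermondeGapIntegrand_swap (s : Finset (ι × ι)) (i j : ι) (q : ℝ) :
    vandermondeGapIntegrand s j i q = vandermondeGapIntegrand s i j q := by
  ext z
  rw [vandermondeGapIntegrand, vandermondeGapIntegrand, abs_sub_comm (z j)]

variable [DecidableEq ι] {i j : ι}

lemma transvection_mulVec_apply {R : Type*} [CommRing R] (c : R) (y : ι → R) (m : ι) :
    (transvection i j c *ᵥ y) m = y m + if m = i then c * y j else 0 := by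
  simp only [transvection, add_mulVec, one_mulVec, single_mulVec, Pi.add_apply,
    Function.update_apply, Pi.zero_apply]

lemma sum_sq_le_three_mul_sum_sq_transvection_mulVec (hij : i ≠ j) (y : ι → ℝ) :
    ∑ m, y m ^ 2 ≤ 3 * ∑ m, (transvection i j (1 : ℝ) *ᵥ y) m ^ 2 := by
  have hexpand : ∑ m, (transvection i j (1 : ℝ) *ᵥ y) m ^ 2
      = ∑ m, y m ^ 2 + (2 * y i * y j + y j ^ 2) := by
    simp only [transvection_mulVec_apply, one_mul]
    calc ∑ m, (y m + if m = i then y j else 0) ^ 2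
        = ∑ m, (y m ^ 2 + if m = i then 2 * y m * y j + y j ^ 2 else 0) :=
          sum_congr rfl fun m _ => by split_ifs <;> ring
      _ = _ := by rw [sum_add_distrib, sum_ite_eq' univ i, if_pos (mem_univ i)]
  have hpair : y i ^ 2 + y j ^ 2 ≤ ∑ m, y m ^ 2 := by
    rw [← sum_pair hij (f := fun m => y m ^ 2)]
    exact sum_le_univ_sum_of_nonneg fun m => sq_nonneg (y m)
  nlinarith [sq_nonneg (2 * y i + 3 * y j)]

lemma vandermondeGapIntegrand_transvection_mulVec_le {s : Finset (ι × ι)} (hs : (i, j) ∈ s)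
    (hij : i ≠ j) (q : ℝ) (y : ι → ℝ) :
    vandermondeGapIntegrand s i j q (transvection i j (1 : ℝ) *ᵥ y) ≤
      4 ^ (#s - 1) * ∏ m, ((1 + |y m|) ^ (#s - 1) *
        (|y m| ^ (if m = i then 1 - q else 0) * exp (-(1 / 12) * y m ^ 2))) := by
  set z := transvection i j (1 : ℝ) *ᵥ y
  set M := ∏ m, (1 + |y m|)
  have hz : ∀ m, z m = y m + if m = i then y j else 0 := fun m => by
    simp [z, transvection_mulVec_apply]
  have hgap : z i - z j = y i := by simp [hz, hij.symm]
  have hcoord : ∀ m, |z m| ≤ 2 * M := fun m => by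
    have hzm : |z m| ≤ |y m| + |y j| := by
      rw [hz]
      split_ifs
      · exact abs_add_le _ _
      · simp
    linarith [abs_le_prod_one_add_abs y m, abs_le_prod_one_add_abs y j]
  have hV : |∏ p ∈ s, (z p.1 - z p.2)| ≤ |y i| * (4 * M) ^ (#s - 1) := by
    rw [← hgap]
    exact abs_prod_le_abs_mul_pow_card_sub_one hs fun p _ =>
      (abs_sub _ _).trans (by linarith [hcoord p.1, hcoord p.2])
  have hexp : exp (-∑ m, z m ^ 2 / 4) ≤ exp (-(1 / 12) * ∑ m, y m ^ 2) := by
    rw [← sum_div]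
    gcongr
    linarith [sum_sq_le_three_mul_sum_sq_transvection_mulVec hij y]
  have hprod : ∏ m, ((1 + |y m|) ^ (#s - 1) *
      (|y m| ^ (if m = i then 1 - q else 0) * exp (-(1 / 12) * y m ^ 2))) =
      M ^ (#s - 1) * (|y i| ^ (1 - q) * exp (-(1 / 12) * ∑ m, y m ^ 2)) := by
    rw [prod_mul_distrib, prod_mul_distrib, prod_pow, mul_sum, exp_sum]
    congr 2
    rw [prod_eq_single i (fun m _ hm => by rw [if_neg hm, rpow_zero]) (by simp), if_pos rfl]
  rw [hprod, vandermondeGapIntegrand, hgap]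
  calc |∏ p ∈ s, (z p.1 - z p.2)| * |y i| ^ (-q) * exp (-∑ m, z m ^ 2 / 4)
      ≤ |y i| * (4 * M) ^ (#s - 1) * |y i| ^ (-q) * exp (-(1 / 12) * ∑ m, y m ^ 2) := by
        gcongr
    _ = (4 * M) ^ (#s - 1) * (|y i| * |y i| ^ (-q)) * exp (-(1 / 12) * ∑ m, y m ^ 2) := by
        ring
    _ ≤ (4 * M) ^ (#s - 1) * |y i| ^ (1 - q) * exp (-(1 / 12) * ∑ m, y m ^ 2) := by
        gcongr
        exact mul_rpow_neg_le_rpow_one_sub (abs_nonneg _) q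
    _ = _ := by rw [mul_pow]; ring

lemma integrable_vandermondeGapIntegrand {s : Finset (ι × ι)} (hs : (i, j) ∈ s) (hij : i ≠ j)
    {q : ℝ} (hq : q < 2) : Integrable (vandermondeGapIntegrand s i j q) := by
  have hT : MeasurePreserving (toLin' (transvection i j (1 : ℝ))) :=
    Real.volume_preserving_transvectionStruct ⟨i, j, hij, 1⟩
  have hmeas : Measurable (vandermondeGapIntegrand s i j q) := by
    unfold vandermondeGapIntegrand
    fun_prop
  rw [← hT.integrable_comp hmeas.aestronglyMeasurable]
  have hfactor : ∀ m, Integrable fun t : ℝ => (1 + |t|) ^ (#s - 1) *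
      (|t| ^ (if m = i then 1 - q else 0) * exp (-(1 / 12) * t ^ 2)) := fun m =>
    integrable_one_add_abs_pow_mul_abs_rpow_mul_exp_neg_mul_sq _
      (by split_ifs <;> linarith) (by norm_num)
  refine ((Integrable.fintype_prod hfactor).const_mul (4 ^ (#s - 1))).mono'
    (hmeas.comp hT.measurable).aestronglyMeasurable (ae_of_all _ fun y => ?_)
  rw [Function.comp_apply, toLin'_apply,
    norm_of_nonneg (by unfold vandermondeGapIntegrand; positivity)]
  exact vandermondeGapIntegrand_transvection_mulVec_le hs hij q y

end

theorem vandermonde_inverse_gap_integrable_general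
    (d : ℕ) (q : ℝ) (hq : q ∈ Set.Ioo (0 : ℝ) 2)
    (i j : Fin d) (hij : i ≠ j) :
    ∫⁻ l in {l : Fin d → ℝ | ∀ k h : Fin d, k < h → l h < l k},
        ENNReal.ofReal
          ((∏ p ∈ Finset.univ.filter (fun p : Fin d × Fin d => p.1 < p.2),
              (l p.1 - l p.2)) *
            |l i - l j| ^ (-q) *
            Real.exp (-∑ m, (l m) ^ 2 / 4)) ∂volume < ⊤ := by
  set pairs := Finset.univ.filter (fun p : Fin d × Fin d => p.1 < p.2)
  have hint : Integrable (vandermondeGapIntegrand pairs i j q) := by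
    rcases hij.lt_or_gt with h | h
    · exact integrable_vandermondeGapIntegrand (by simp [pairs, h]) hij hq.2
    · rw [← vandermondeGapIntegrand_swap]
      exact integrable_vandermondeGapIntegrand (by simp [pairs, h]) hij.symm hq.2
  refine (setLIntegral_le_lintegral _ _).trans_lt
    ((lintegral_mono fun l => ?_).trans_lt hint.lintegral_lt_top)
  rw [vandermondeGapIntegrand]
  gcongr
  exact le_abs_self _

/-- The integral over the ordered simplex `{μ_1 > ⋯ > μ_d}` of
`∏_{k<h}(μ_k - μ_h) · |μ_i - μ_j|^{-q} · exp(-∑ μ_m²/4)` is finite for every `0 < q < 2`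
and every pair `i ≠ j`. -/
theorem vandermonde_inverse_gap_integrable
    (d : ℕ) (hd : 2 ≤ d) (q : ℝ) (hq : q ∈ Set.Ioo (0 : ℝ) 2)
    (i j : Fin d) (hij : i ≠ j) :
    ∫⁻ l in {l : Fin d → ℝ | ∀ k h : Fin d, k < h → l h < l k},
        ENNReal.ofReal
          ((∏ p ∈ Finset.univ.filter (fun p : Fin d × Fin d => p.1 < p.2),
              (l p.1 - l p.2)) *
            |l i - l j| ^ (-q) *
            Real.exp (-∑ m, (l m) ^ 2 / 4)) ∂volume < ⊤ :=
  vandermonde_inverse_gap_integrable_general d q hq i j hij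
end

section
/- With the same parametrization, the sum of pure second derivatives satisfies ∑_{k ≤ h} ∂²Φ_i/∂b_{kh}² = 2 ∑_{j ≠ i} 1/(λ_i - λ_j), where ∂²Φ_i/∂b_{kh}² = 2∑_{j≠i} |U_{ik}U_{jh} + U_{ih}U_{jk}|²/(λ_i - λ_j) for k < h and 4∑_{j≠i} |U_{ik}U_{jk}|²/(λ_i - λ_j) for k = h. -/
/-!
On the diagonal `(U_{ik}U_{jk} + U_{ik}U_{jk})² = 4 (U_{ik}U_{jk})²`, and off it the summand is
symmetric in `(k, h)`, so the left side is `∑_{j ≠ i} S_j / (λ_i - λ_j)` with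
`S_j = ∑_{k,h} (U_{ik}U_{jh} + U_{ih}U_{jk})²` over all ordered pairs. Expanding the square,
`S_j = 2 (∑_k U_{ik}²)(∑_h U_{jh}²) + 2 (∑_k U_{ik}U_{jk})² = 2` by orthonormality of the rows of `U`.
-/

open Matrix

theorem Finset.sum_filter_le_ite_lt_eq_sum_of_swap {ι R : Type*} [Fintype ι] [LinearOrder ι]
    [NonAssocSemiring R] (g : ι × ι → R) (hg : ∀ p, g p.swap = g p) :
    ∑ p ∈ univ.filter (fun p : ι × ι => p.1 ≤ p.2), (if p.1 < p.2 then 2 * g p else g p) =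
      ∑ p, g p := by
  have hlt_swap : ∑ p : ι × ι, (if p.2 < p.1 then g p else 0) =
      ∑ p : ι × ι, (if p.1 < p.2 then g p else 0) :=
    Fintype.sum_equiv (Equiv.prodComm ι ι) _ _ fun p => by simp [hg]
  calc ∑ p ∈ univ.filter (fun p : ι × ι => p.1 ≤ p.2), (if p.1 < p.2 then 2 * g p else g p)
      = ∑ p : ι × ι, (2 * (if p.1 < p.2 then g p else 0) + (if p.1 = p.2 then g p else 0)) := by
        rw [sum_filter]
        refine sum_congr rfl fun p _ => ?_
        rcases lt_trichotomy p.1 p.2 with h | h | h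
        · simp [h, h.le, h.ne]
        · simp [h]
        · simp [h.not_ge, h.not_gt, h.ne']
    _ = ∑ p : ι × ι, ((if p.1 < p.2 then g p else 0) + (if p.2 < p.1 then g p else 0) +
          (if p.1 = p.2 then g p else 0)) := by
        simp only [sum_add_distrib, hlt_swap, two_mul]
    _ = ∑ p, g p := by
        refine sum_congr rfl fun p _ => ?_
        rcases lt_trichotomy p.1 p.2 with h | h | h
        · simp [h, h.ne, h.not_gt]
        · simp [h]
        · simp [h, h.ne', h.not_gt]

theorem Finset.sum_mul_add_mul_swap_sq {ι R : Type*} [Fintype ι] [CommSemiring R] (a b : ι → R) :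
    ∑ p : ι × ι, (a p.1 * b p.2 + a p.2 * b p.1) ^ 2 =
      2 * (∑ k, a k ^ 2) * (∑ k, b k ^ 2) + 2 * (∑ k, a k * b k) ^ 2 := by
  have hswap : ∑ p : ι × ι, a p.2 ^ 2 * b p.1 ^ 2 = ∑ p : ι × ι, a p.1 ^ 2 * b p.2 ^ 2 :=
    Fintype.sum_equiv (Equiv.prodComm ι ι) _ _ fun p => by simp
  calc ∑ p : ι × ι, (a p.1 * b p.2 + a p.2 * b p.1) ^ 2
      = ∑ p : ι × ι, (a p.1 ^ 2 * b p.2 ^ 2 + a p.2 ^ 2 * b p.1 ^ 2 +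
          2 * ((a p.1 * b p.1) * (a p.2 * b p.2))) :=
        sum_congr rfl fun p _ => by ring
    _ = 2 * ((∑ k, a k ^ 2) * (∑ k, b k ^ 2)) + 2 * ((∑ k, a k * b k) * (∑ k, a k * b k)) := by
        simp only [sum_add_distrib, hswap, ← mul_sum, Fintype.sum_mul_sum, Fintype.sum_prod_type]
        ring
    _ = _ := by ring

theorem Matrix.sum_mul_eq_ite_of_mul_transpose_eq_one {n R : Type*} [Fintype n] [DecidableEq n]
    [CommSemiring R] {U : Matrix n n R} (hU : U * Uᵀ = 1) (i j : n) :
    ∑ k, U i k * U j k = if i = j then 1 else 0 := by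
  simpa [mul_apply, one_apply] using congrFun (congrFun hU i) j

theorem Matrix.sum_mul_add_mul_swap_sq_eq_two_of_mul_transpose_eq_one {n R : Type*} [Fintype n]
    [DecidableEq n] [CommRing R] {U : Matrix n n R} (hU : U * Uᵀ = 1) {i j : n} (hij : i ≠ j) :
    ∑ p : n × n, (U i p.1 * U j p.2 + U i p.2 * U j p.1) ^ 2 = 2 := by
  have row_sq (l : n) : ∑ k, U l k ^ 2 = 1 := by
    simpa [sq] using sum_mul_eq_ite_of_mul_transpose_eq_one hU l l
  rw [Finset.sum_mul_add_mul_swap_sq, row_sq, row_sq, sum_mul_eq_ite_of_mul_transpose_eq_one hU,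
    if_neg hij]
  ring

theorem eigenvalue_laplacian_identity_general
    (d : ℕ) (U : Matrix (Fin d) (Fin d) ℝ) (horth : U * Uᵀ = 1)
    (lam : Fin d → ℝ) (i : Fin d) :
    ∑ p ∈ Finset.univ.filter (fun p : Fin d × Fin d => p.1 ≤ p.2),
        (if p.1 < p.2 then
            2 * ∑ j ∈ Finset.univ.erase i,
              (U i p.1 * U j p.2 + U i p.2 * U j p.1) ^ 2 / (lam i - lam j)
          else
            4 * ∑ j ∈ Finset.univ.erase i,
              (U i p.1 * U j p.1) ^ 2 / (lam i - lam j))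
      = 2 * ∑ j ∈ Finset.univ.erase i, 1 / (lam i - lam j) := by
  set g : Fin d × Fin d → ℝ := fun p => ∑ j ∈ Finset.univ.erase i,
    (U i p.1 * U j p.2 + U i p.2 * U j p.1) ^ 2 / (lam i - lam j) with hg
  have hdiag : ∀ p ∈ Finset.univ.filter (fun p : Fin d × Fin d => p.1 ≤ p.2), ¬p.1 < p.2 →
      4 * ∑ j ∈ Finset.univ.erase i, (U i p.1 * U j p.1) ^ 2 / (lam i - lam j) = g p := by
    intro p hp hlt
    obtain ⟨k, h⟩ := p
    obtain rfl : k = h := le_antisymm (Finset.mem_filter.mp hp).2 (not_lt.mp hlt)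
    rw [hg, Finset.mul_sum]
    exact Finset.sum_congr rfl fun j _ => by ring
  rw [Finset.sum_congr rfl fun p hp => ite_congr rfl (fun _ => rfl) (hdiag p hp),
    Finset.sum_filter_le_ite_lt_eq_sum_of_swap g fun p => by simp only [hg, Prod.fst_swap,
      Prod.snd_swap, add_comm], hg, Finset.sum_comm, Finset.mul_sum]
  refine Finset.sum_congr rfl fun j hj => ?_
  rw [← Finset.sum_div, sum_mul_add_mul_swap_sq_eq_two_of_mul_transpose_eq_one horth
    (Finset.ne_of_mem_erase hj).symm, mul_one_div]

/-- With the same parametrization, the sum of pure second derivatives of the eigenvalue map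
satisfies `∑_{k≤h} ∂²Φ_i/∂b_{kh}² = 2 ∑_{j≠i} 1/(λ_i - λ_j)`, where
`∂²Φ_i/∂b_{kh}² = 2∑_{j≠i} |U_{ik}U_{jh}+U_{ih}U_{jk}|²/(λ_i-λ_j)` for `k<h` and
`4∑_{j≠i} |U_{ik}U_{jk}|²/(λ_i-λ_j)` for `k = h`. -/
theorem eigenvalue_laplacian_identity
    (d : ℕ) (U : Matrix (Fin d) (Fin d) ℝ) (horth : U * Uᵀ = 1)
    (lam : Fin d → ℝ) (hdistinct : Function.Injective lam) (i : Fin d) :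
    ∑ p ∈ Finset.univ.filter (fun p : Fin d × Fin d => p.1 ≤ p.2),
        (if p.1 < p.2 then
            2 * ∑ j ∈ Finset.univ.erase i,
              (U i p.1 * U j p.2 + U i p.2 * U j p.1) ^ 2 / (lam i - lam j)
          else
            4 * ∑ j ∈ Finset.univ.erase i,
              (U i p.1 * U j p.1) ^ 2 / (lam i - lam j))
      = 2 * ∑ j ∈ Finset.univ.erase i, 1 / (lam i - lam j) :=
  eigenvalue_laplacian_identity_general d U horth lam i
end
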